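/- arXiv:1603.07175 — 6 statements merged into one kernel-verified Lean document; each statement's English description precedes it below -/
import Mathlib

section
/- The function Z := w^{(p+1)/2} satisfies the linearized eigenvalue equation Z'' − Z + p w^{p−1} Z = λ₀ Z on ℝ, where λ₀ = (1/4)(p−1)(p+3). -/
open Real Filter Topology

/-!
Multiplying `w'' = w - w ^ p` by `w'` shows that `w' ^ 2 - w ^ 2 + 2 / (p + 1) * w ^ (p + 1)` is
constant, and the decay at `+∞` makes the constant zero. For `Z = w ^ c` one has
`Z'' = c w ^ (c - 1) w'' + c (c - 1) w ^ (c - 2) w' ^ 2`; substituting both identities with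
`c = (p + 1) / 2` gives `Z'' = c ^ 2 Z - p w ^ (p - 1) Z`, and `c ^ 2 - 1 = (p - 1) (p + 3) / 4`.
-/

theorem deriv_deriv_rpow_const {w : ℝ → ℝ} (hw_pos : ∀ x, 0 < w x) (hd : Differentiable ℝ w)
    (hd' : Differentiable ℝ (deriv w)) (c x : ℝ) :
    deriv (deriv fun y => w y ^ c) x =
      c * w x ^ (c - 1) * deriv (deriv w) x + c * (c - 1) * w x ^ (c - 2) * deriv w x ^ 2 := by
  have hZ' : deriv (fun y => w y ^ c) = fun y => deriv w y * c * w y ^ (c - 1) :=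
    funext fun y => ((hd y).hasDerivAt.rpow_const (Or.inl (hw_pos y).ne')).deriv
  have hZ'' := ((hd' x).hasDerivAt.mul_const c).mul
    ((hd x).hasDerivAt.rpow_const (p := c - 1) (Or.inl (hw_pos x).ne'))
  rw [hZ']
  refine hZ''.deriv.trans ?_
  rw [show c - 1 - 1 = c - 2 by ring]
  ring

theorem hasDerivAt_energy {w : ℝ → ℝ} {p : ℝ} (hp : p + 1 ≠ 0) (hw_pos : ∀ x, 0 < w x)
    (hd : Differentiable ℝ w) (hd' : Differentiable ℝ (deriv w))
    (hw_eq : ∀ x, deriv (deriv w) x = w x - w x ^ p) (x : ℝ) :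
    HasDerivAt (fun y => deriv w y ^ 2 - w y ^ 2 + 2 / (p + 1) * w y ^ (p + 1)) 0 x := by
  have hpow := (hd x).hasDerivAt.rpow_const (p := p + 1) (Or.inl (hw_pos x).ne')
  refine ((((hd' x).hasDerivAt.pow 2).sub ((hd x).hasDerivAt.pow 2)).add
    (hpow.const_mul (2 / (p + 1)))).congr_deriv ?_
  rw [hw_eq, add_sub_cancel_right]
  field_simp
  ring

theorem energy_eq_zero {w : ℝ → ℝ} {p : ℝ} (hp : 0 < p + 1) (hw_pos : ∀ x, 0 < w x)
    (hd : Differentiable ℝ w) (hd' : Differentiable ℝ (deriv w))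
    (hw_eq : ∀ x, deriv (deriv w) x = w x - w x ^ p)
    (hw_lim : Tendsto w atTop (𝓝 0)) (hw'_lim : Tendsto (deriv w) atTop (𝓝 0)) (x : ℝ) :
    deriv w x ^ 2 - w x ^ 2 + 2 / (p + 1) * w x ^ (p + 1) = 0 := by
  set E := fun y => deriv w y ^ 2 - w y ^ 2 + 2 / (p + 1) * w y ^ (p + 1)
  have hE_const : ∀ y, E y = E x := fun y =>
    is_const_of_deriv_eq_zero
      (fun z => (hasDerivAt_energy hp.ne' hw_pos hd hd' hw_eq z).differentiableAt)
      (fun z => (hasDerivAt_energy hp.ne' hw_pos hd hd' hw_eq z).deriv) y x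
  have hpow_lim : Tendsto (fun y => w y ^ (p + 1)) atTop (𝓝 0) := by
    simpa [zero_rpow hp.ne', Function.comp_def] using
      (continuousAt_rpow_const 0 (p + 1) (Or.inr hp.le)).tendsto.comp hw_lim
  have hE_lim : Tendsto E atTop (𝓝 0) := by
    simpa using ((hw'_lim.pow 2).sub (hw_lim.pow 2)).add (hpow_lim.const_mul (2 / (p + 1)))
  exact tendsto_nhds_unique (tendsto_const_nhds.congr fun y => (hE_const y).symm) hE_lim

theorem tendsto_atTop_zero_of_abs_le_exp {f : ℝ → ℝ} {C a : ℝ} (ha : 0 < a)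
    (hf : ∀ x, |f x| ≤ C * exp (-a * |x|)) : Tendsto f atTop (𝓝 0) := by
  have hexp : Tendsto (fun x : ℝ => C * exp (-a * |x|)) atTop (𝓝 0) := by
    simpa using (tendsto_exp_atBot.comp
      (tendsto_abs_atTop_atTop.const_mul_atTop_of_neg (neg_neg_of_pos ha))).const_mul C
  exact squeeze_zero_norm hf hexp

theorem linearized_eigenvalue_identity {p W v : ℝ} (hp : p + 1 ≠ 0) (hW : 0 < W)
    (hv : v ^ 2 = W ^ 2 - 2 / (p + 1) * W ^ (p + 1)) :
    (p + 1) / 2 * W ^ ((p + 1) / 2 - 1) * (W - W ^ p)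
        + (p + 1) / 2 * ((p + 1) / 2 - 1) * W ^ ((p + 1) / 2 - 2) * v ^ 2
        - W ^ ((p + 1) / 2) + p * W ^ (p - 1) * W ^ ((p + 1) / 2)
      = 1 / 4 * (p - 1) * (p + 3) * W ^ ((p + 1) / 2) := by
  have h1 : W ^ ((p + 1) / 2 - 1) = W ^ ((p + 1) / 2) / W := by
    rw [rpow_sub hW, rpow_one]
  have h2 : W ^ ((p + 1) / 2 - 2) = W ^ ((p + 1) / 2) / W ^ 2 := by
    rw [rpow_sub hW, rpow_two]
  have h3 : W ^ p = W ^ (p - 1) * W := by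
    rw [← rpow_add_one hW.ne', sub_add_cancel]
  have h4 : W ^ (p + 1) = W ^ (p - 1) * W ^ 2 := by
    rw [← rpow_two, ← rpow_add hW]; ring_nf
  rw [hv, h1, h2, h3, h4]
  field_simp
  ring

/-- The function `Z := w ^ ((p+1)/2)` satisfies the linearized eigenvalue equation
`Z'' − Z + p w^(p−1) Z = λ₀ Z` on `ℝ`, where `λ₀ = (1/4)(p−1)(p+3)`. -/
theorem eigenfunction_of_linearized_operator
    (p : ℝ) (hp : 1 < p) (w : ℝ → ℝ)
    (hw_pos : ∀ x, 0 < w x)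
    (hw_smooth : ContDiff ℝ 2 w)
    (hw_eq : ∀ x, deriv (deriv w) x - w x + w x ^ p = 0)
    (hdecay : ∃ C₀ > (0:ℝ), ∃ a > (0:ℝ),
      ∀ x : ℝ, w x + |deriv w x| ≤ C₀ * Real.exp (-a * |x|)) :
    ∀ x : ℝ,
      deriv (deriv (fun y => w y ^ ((p + 1) / 2))) x
        - w x ^ ((p + 1) / 2)
        + p * w x ^ (p - 1) * (w x ^ ((p + 1) / 2))
      = (1 / 4) * (p - 1) * (p + 3) * (w x ^ ((p + 1) / 2)) := by
  obtain ⟨C₀, -, a, ha, hbound⟩ := hdecay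
  have hp1 : 0 < p + 1 := by linarith
  have hd : Differentiable ℝ w := hw_smooth.differentiable (by norm_num)
  have hd' : Differentiable ℝ (deriv w) :=
    (hw_smooth.iterate_deriv' 1 1).differentiable (by norm_num)
  have hw_eq' : ∀ x, deriv (deriv w) x = w x - w x ^ p := fun x => by linarith [hw_eq x]
  have hw_lim : Tendsto w atTop (𝓝 0) :=
    tendsto_atTop_zero_of_abs_le_exp (C := C₀) ha fun x => by
      rw [abs_of_pos (hw_pos x)]; linarith [hbound x, abs_nonneg (deriv w x)]
  have hw'_lim : Tendsto (deriv w) atTop (𝓝 0) :=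
    tendsto_atTop_zero_of_abs_le_exp (C := C₀) ha fun x => by linarith [hbound x, hw_pos x]
  intro x
  have henergy := energy_eq_zero hp1 hw_pos hd hd' hw_eq' hw_lim hw'_lim x
  rw [deriv_deriv_rpow_const hw_pos hd hd', hw_eq']
  exact linearized_eigenvalue_identity hp1.ne' (hw_pos x) (by linarith)
end

section
/- There holds the identity ∫_ℝ w(x)² dx = 2σ ∫_ℝ w'(x)² dx, and consequently the solvability (orthogonality) condition ∫_ℝ (w'(x) + σ^{−1} x w(x)) w'(x) dx = 0. -/
/-!
The first integral `E = w'² - w² + 2/(p+1) w^{p+1}` of `w'' = w - w^p` is constant and vanishes at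
infinity, so `w^{p+1} = (p+1)/2 (w² - w'²)`. Integrating `(w w')' = w'² + w² - w^{p+1}` over `ℝ`
then gives `(p+3) ∫ w'² = (p-1) ∫ w²`, i.e. `∫ w² = 2σ ∫ w'²`. Integrating `(x w²/2)' = w²/2 + x w w'`
gives `∫ x w w' = -∫ w²/2`, which turns the orthogonality integral into `∫ w'² - σ⁻¹ ∫ w²/2 = 0`.
-/

open Real MeasureTheory Filter Topology

def ExpDecaying (f : ℝ → ℝ) : Prop :=
  ∃ C a : ℝ, 0 < a ∧ ∀ x, |f x| ≤ C * exp (-a * |x|)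

lemma integrable_exp_neg_mul_abs {a : ℝ} (ha : 0 < a) :
    Integrable fun x : ℝ => exp (-a * |x|) := by
  refine Integrable.of_integral_ne_zero ?_
  rw [integral_comp_abs (f := fun x => exp (-a * x)),
    integral_exp_mul_Ioi (neg_lt_zero.mpr ha)]
  simp [ha.ne']

lemma abs_mul_exp_neg_mul_abs_le {a : ℝ} (ha : 0 < a) (x : ℝ) :
    |x| * exp (-a * |x|) ≤ 2 / a * exp (-(a / 2) * |x|) := by
  have hy : a / 2 * |x| * exp (-(a / 2 * |x|)) ≤ 1 :=
    (mul_exp_neg_le_exp_neg_one _).trans (exp_le_one_iff.mpr (by norm_num))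
  have hsplit : exp (-a * |x|) = exp (-(a / 2 * |x|)) * exp (-(a / 2) * |x|) := by
    rw [← exp_add]; ring_nf
  rw [hsplit, ← mul_assoc]
  gcongr
  rw [le_div_iff₀ ha]
  linarith

lemma nonneg_of_abs_le_mul_exp {f : ℝ → ℝ} {C a : ℝ}
    (h : ∀ x, |f x| ≤ C * exp (-a * |x|)) : 0 ≤ C :=
  nonneg_of_mul_nonneg_left ((abs_nonneg _).trans (h 0)) (exp_pos _)

namespace ExpDecaying

variable {f g : ℝ → ℝ}

lemma mul (hf : ExpDecaying f) (hg : ExpDecaying g) : ExpDecaying fun x => f x * g x := by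
  obtain ⟨C, a, ha, hfC⟩ := hf
  obtain ⟨D, b, hb, hgD⟩ := hg
  refine ⟨C * D, a + b, add_pos ha hb, fun x => ?_⟩
  have hC := nonneg_of_abs_le_mul_exp hfC
  calc |f x * g x| = |f x| * |g x| := abs_mul _ _
    _ ≤ C * exp (-a * |x|) * (D * exp (-b * |x|)) :=
        mul_le_mul (hfC x) (hgD x) (abs_nonneg _) (by positivity)
    _ = C * D * exp (-(a + b) * |x|) := by rw [mul_mul_mul_comm, ← exp_add]; ring_nf

lemma sq (hf : ExpDecaying f) : ExpDecaying fun x => f x ^ 2 := by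
  simpa only [pow_two] using hf.mul hf

lemma id_mul (hf : ExpDecaying f) : ExpDecaying fun x => x * f x := by
  obtain ⟨C, a, ha, hfC⟩ := hf
  refine ⟨C * (2 / a), a / 2, half_pos ha, fun x => ?_⟩
  have hC := nonneg_of_abs_le_mul_exp hfC
  calc |x * f x| = |x| * |f x| := abs_mul _ _
    _ ≤ |x| * (C * exp (-a * |x|)) := by gcongr; exact hfC x
    _ = C * (|x| * exp (-a * |x|)) := by ring
    _ ≤ C * (2 / a * exp (-(a / 2) * |x|)) :=
        mul_le_mul_of_nonneg_left (abs_mul_exp_neg_mul_abs_le ha x) hC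
    _ = C * (2 / a) * exp (-(a / 2) * |x|) := by ring

lemma integrable (hf : ExpDecaying f) (hm : AEStronglyMeasurable f) : Integrable f := by
  obtain ⟨C, a, ha, hfC⟩ := hf
  exact ((integrable_exp_neg_mul_abs ha).const_mul C).mono' hm
    (ae_of_all _ fun x => by simpa only [Real.norm_eq_abs] using hfC x)

lemma tendsto_atTop (hf : ExpDecaying f) : Tendsto f atTop (𝓝 0) := by
  obtain ⟨C, a, ha, hfC⟩ := hf
  have hexp : Tendsto (fun x : ℝ => exp (-a * |x|)) atTop (𝓝 0) := by
    simpa only [neg_mul, Function.comp_def] using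
      tendsto_exp_neg_atTop_nhds_zero.comp (tendsto_abs_atTop_atTop.const_mul_atTop ha)
  exact squeeze_zero_norm (fun x => by simpa only [Real.norm_eq_abs] using hfC x)
    (by simpa using hexp.const_mul C)

end ExpDecaying

lemma integrable_id_mul_mul_deriv {w : ℝ → ℝ} (hw : Continuous w)
    (hw_decay : ExpDecaying w) (hw'_decay : ExpDecaying (deriv w)) :
    Integrable fun x => x * (w x * deriv w x) :=
  (hw_decay.mul hw'_decay).id_mul.integrable
    (continuous_id.aestronglyMeasurable.mul
      (hw.aestronglyMeasurable.mul (measurable_deriv w).aestronglyMeasurable))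

lemma integral_id_mul_mul_deriv {w : ℝ → ℝ} (hw : Differentiable ℝ w)
    (hw_decay : ExpDecaying w) (hw'_decay : ExpDecaying (deriv w)) :
    ∫ x, x * (w x * deriv w x) = -(∫ x, w x ^ 2) / 2 := by
  have hsq : Integrable fun x => w x ^ 2 :=
    hw_decay.sq.integrable (hw.continuous.pow 2).aestronglyMeasurable
  have hxww' := integrable_id_mul_mul_deriv hw.continuous hw_decay hw'_decay
  have hxw2 : Integrable fun x => x * w x ^ 2 / 2 :=
    (hw_decay.sq.id_mul.integrable
      (continuous_id.mul (hw.continuous.pow 2)).aestronglyMeasurable).div_const 2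
  have hderiv : ∀ x, HasDerivAt (fun x => x * w x ^ 2 / 2)
      (w x ^ 2 / 2 + x * (w x * deriv w x)) x := fun x => by
    refine (((hasDerivAt_id' x).mul ((hw x).hasDerivAt.pow 2)).div_const 2).congr_deriv ?_
    push_cast [Pi.pow_apply]
    ring
  have h := integral_eq_zero_of_hasDerivAt_of_integrable hderiv
    ((hsq.div_const 2).add hxww') hxw2
  rw [integral_add (hsq.div_const 2) hxww', integral_div] at h
  linarith

lemma integral_deriv_add_const_mul_mul_deriv {w : ℝ → ℝ} (hw : Differentiable ℝ w)
    (hw_decay : ExpDecaying w) (hw'_decay : ExpDecaying (deriv w)) (c : ℝ) :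
    ∫ x, (deriv w x + c * x * w x) * deriv w x =
      (∫ x, deriv w x ^ 2) - c / 2 * ∫ x, w x ^ 2 := by
  have hw'sq : Integrable fun x => deriv w x ^ 2 :=
    hw'_decay.sq.integrable ((measurable_deriv w).pow_const 2).aestronglyMeasurable
  have hxww' := integrable_id_mul_mul_deriv hw.continuous hw_decay hw'_decay
  have hsplit : (fun x => (deriv w x + c * x * w x) * deriv w x) =
      fun x => deriv w x ^ 2 + c * (x * (w x * deriv w x)) := by
    funext x; ring
  rw [hsplit, integral_add hw'sq (hxww'.const_mul c), integral_const_mul,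
    integral_id_mul_mul_deriv hw hw_decay hw'_decay]
  ring

section GroundState

variable {p : ℝ} {w : ℝ → ℝ}

noncomputable def groundStateEnergy (p : ℝ) (w : ℝ → ℝ) (x : ℝ) : ℝ :=
  deriv w x ^ 2 - w x ^ 2 + 2 / (p + 1) * w x ^ (p + 1)

lemma hasDerivAt_groundStateEnergy (hp : p + 1 ≠ 0) {x : ℝ} (hw : DifferentiableAt ℝ w x)
    (hw' : DifferentiableAt ℝ (deriv w) x) (hwx : w x ≠ 0)
    (hw_eq : deriv (deriv w) x - w x + w x ^ p = 0) :
    HasDerivAt (groundStateEnergy p w) 0 x := by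
  have h := ((hw'.hasDerivAt.pow 2).sub (hw.hasDerivAt.pow 2)).add
    ((hw.hasDerivAt.rpow_const (p := p + 1) (Or.inl hwx)).const_mul (2 / (p + 1)))
  refine h.congr_deriv ?_
  rw [add_sub_cancel_right]
  field_simp
  linear_combination 2 * deriv w x * hw_eq

lemma groundStateEnergy_eq_zero (hp : 0 < p + 1) (hw : Differentiable ℝ w)
    (hw' : Differentiable ℝ (deriv w)) (hw_ne : ∀ x, w x ≠ 0)
    (hw_eq : ∀ x, deriv (deriv w) x - w x + w x ^ p = 0)
    (hw_lim : Tendsto w atTop (𝓝 0)) (hw'_lim : Tendsto (deriv w) atTop (𝓝 0)) (x : ℝ) :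
    groundStateEnergy p w x = 0 := by
  have hderiv y := hasDerivAt_groundStateEnergy hp.ne' (hw y) (hw' y) (hw_ne y) (hw_eq y)
  have hconst : ∀ y, groundStateEnergy p w y = groundStateEnergy p w x :=
    fun y => is_const_of_deriv_eq_zero (fun y => (hderiv y).differentiableAt)
      (fun y => (hderiv y).deriv) y x
  have hpow : Tendsto (fun y => w y ^ (p + 1)) atTop (𝓝 0) := by
    simpa [Function.comp_def, zero_rpow hp.ne'] using
      ((continuousAt_rpow_const 0 (p + 1) (Or.inr hp.le)).tendsto.comp hw_lim)
  have hlim : Tendsto (groundStateEnergy p w) atTop (𝓝 0) := by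
    have h := ((hw'_lim.pow 2).sub (hw_lim.pow 2)).add (hpow.const_mul (2 / (p + 1)))
    norm_num at h
    exact h
  exact tendsto_nhds_unique (tendsto_const_nhds.congr fun y => (hconst y).symm) hlim

lemma add_three_mul_integral_deriv_sq (hp : 0 < p + 1) (hw : Differentiable ℝ w)
    (hw' : Differentiable ℝ (deriv w)) (hw_ne : ∀ x, w x ≠ 0)
    (hw_eq : ∀ x, deriv (deriv w) x - w x + w x ^ p = 0)
    (hw_decay : ExpDecaying w) (hw'_decay : ExpDecaying (deriv w)) :
    (p + 3) * ∫ x, deriv w x ^ 2 = (p - 1) * ∫ x, w x ^ 2 := by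
  have hp1 : p + 1 ≠ 0 := hp.ne'
  have hderiv : ∀ x, HasDerivAt (fun x => w x * deriv w x)
      (((p + 3) * deriv w x ^ 2 - (p - 1) * w x ^ 2) / 2) x := fun x => by
    have hE := groundStateEnergy_eq_zero hp hw hw' hw_ne hw_eq
      hw_decay.tendsto_atTop hw'_decay.tendsto_atTop x
    rw [groundStateEnergy, rpow_add_one (hw_ne x)] at hE
    field_simp at hE
    refine ((hw x).hasDerivAt.mul (hw' x).hasDerivAt).congr_deriv ?_
    linear_combination w x * hw_eq x - hE / 2
  have hsq : Integrable fun x => w x ^ 2 :=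
    hw_decay.sq.integrable (hw.continuous.pow 2).aestronglyMeasurable
  have hw'sq : Integrable fun x => deriv w x ^ 2 :=
    hw'_decay.sq.integrable (hw'.continuous.pow 2).aestronglyMeasurable
  have hww' : Integrable fun x => w x * deriv w x :=
    (hw_decay.mul hw'_decay).integrable (hw.continuous.mul hw'.continuous).aestronglyMeasurable
  have h := integral_eq_zero_of_hasDerivAt_of_integrable hderiv
    (((hw'sq.const_mul (p + 3)).sub (hsq.const_mul (p - 1))).div_const 2) hww'
  rw [integral_div, integral_sub (hw'sq.const_mul _) (hsq.const_mul _), integral_const_mul,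
    integral_const_mul] at h
  linarith

end GroundState

/-- `∫ w² = 2σ ∫ (w')²`, and consequently the orthogonality condition
`∫ (w' + σ⁻¹ x w) w' = 0`, for `σ = (p+1)/(p−1) − 1/2` and `w` the ground state. -/
theorem integral_identity_and_orthogonality
    (p : ℝ) (hp : 1 < p) (σ : ℝ) (hσ : σ = (p + 1) / (p - 1) - 1 / 2)
    (w : ℝ → ℝ)
    (hw_pos : ∀ x, 0 < w x)
    (hw_smooth : ContDiff ℝ 2 w)
    (hw_eq : ∀ x, deriv (deriv w) x - w x + w x ^ p = 0)
    (hdecay : ∃ C₀ > (0:ℝ), ∃ a > (0:ℝ),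
      ∀ x : ℝ, w x + |deriv w x| ≤ C₀ * Real.exp (-a * |x|)) :
    (∫ x : ℝ, (w x) ^ 2) = 2 * σ * ∫ x : ℝ, (deriv w x) ^ 2 ∧
    (∫ x : ℝ, (deriv w x + σ⁻¹ * x * w x) * deriv w x) = 0 := by
  obtain ⟨C₀, -, a, ha, hdec⟩ := hdecay
  have hw := hw_smooth.differentiable two_ne_zero
  have hw' := hw_smooth.differentiable_deriv_two
  have hw_decay : ExpDecaying w := ⟨C₀, a, ha, fun x => by
    rw [abs_of_pos (hw_pos x)]; linarith [hdec x, abs_nonneg (deriv w x)]⟩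
  have hw'_decay : ExpDecaying (deriv w) := ⟨C₀, a, ha, fun x => by linarith [hdec x, hw_pos x]⟩
  have hpσ : p + 3 = 2 * σ * (p - 1) := by
    rw [hσ]; field_simp [(sub_pos.mpr hp).ne']; ring
  have hσ0 : σ ≠ 0 := by rintro rfl; linarith
  have hmain := add_three_mul_integral_deriv_sq (by linarith) hw hw' (fun x => (hw_pos x).ne') hw_eq
    hw_decay hw'_decay
  have hsq : ∫ x, w x ^ 2 = 2 * σ * ∫ x, deriv w x ^ 2 := by
    refine mul_left_cancel₀ (sub_pos.mpr hp).ne' ?_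
    linear_combination -hmain + (∫ x, deriv w x ^ 2) * hpσ
  refine ⟨hsq, ?_⟩
  rw [integral_deriv_add_const_mul_mul_deriv hw hw_decay hw'_decay, hsq]
  field_simp
  ring
end

section
/- The function w₂ satisfies −w₂''(x) + w₂(x) − p w(x)^{p−1} w₂(x) = w(x) for every x ∈ ℝ. -/
/-!
Differentiating the equation gives `w''' = (1 - p w^(p-1)) w'`, and `(x w')'' = 2 w'' + x w'''`.
Hence, for `L = -∂² + 1 - p w^(p-1)`, one has `L w = (1 - p) w^p` and `L (x w') = -2 w'' = -2 (w - w^p)`,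
and `L w₂ = w^p + (w - w^p) = w`.
-/

lemma deriv_deriv_add_mul_id_mul_deriv {f f₃ : ℝ → ℝ} (hf : Differentiable ℝ f)
    (hf' : Differentiable ℝ (deriv f)) (hf₃ : ∀ x, HasDerivAt (deriv (deriv f)) (f₃ x) x)
    (a b x : ℝ) :
    deriv (deriv fun y => a * f y + b * y * deriv f y) x =
      (a + 2 * b) * deriv (deriv f) x + b * x * f₃ x := by
  have hderiv : deriv (fun y => a * f y + b * y * deriv f y) =
      fun y => (a + b) * deriv f y + b * y * deriv (deriv f) y := by
    funext y
    refine (((hf y).hasDerivAt.const_mul a).add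
      (((hasDerivAt_id y).const_mul b).mul (hf' y).hasDerivAt)).deriv.trans ?_
    simp only [id_eq]
    ring
  rw [hderiv]
  refine (((hf' x).hasDerivAt.const_mul (a + b)).add
    (((hasDerivAt_id x).const_mul b).mul (hf₃ x))).deriv.trans ?_
  simp only [id_eq]
  ring

lemma hasDerivAt_deriv_deriv_of_deriv_deriv_eq {p x : ℝ} {w : ℝ → ℝ} (hwx : w x ≠ 0)
    (hw : Differentiable ℝ w) (hw_eq : ∀ y, deriv (deriv w) y = w y - w y ^ p) :
    HasDerivAt (deriv (deriv w)) ((1 - p * w x ^ (p - 1)) * deriv w x) x := by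
  rw [funext hw_eq]
  have hw_x := (hw x).hasDerivAt
  exact (hw_x.sub (hw_x.rpow_const (Or.inl hwx))).congr_deriv (by ring)

theorem w2_solves_linearized_equation_general
    (p : ℝ) (hp : 1 < p) (w : ℝ → ℝ)
    (hw_pos : ∀ x, 0 < w x)
    (hw_smooth : ContDiff ℝ 2 w)
    (hw_eq : ∀ x, deriv (deriv w) x - w x + w x ^ p = 0)
    (w₂ : ℝ → ℝ)
    (hw₂ : w₂ = fun x => -(w x) / (p - 1) - (1 / 2) * x * deriv w x) :
    ∀ x : ℝ,
      -(deriv (deriv w₂) x) + w₂ x - p * w x ^ (p - 1) * w₂ x = w x := by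
  intro x
  have hw : Differentiable ℝ w := hw_smooth.differentiable (by norm_num)
  have hw' : Differentiable ℝ (deriv w) :=
    (hw_smooth.iterate_deriv' 1 1).differentiable one_ne_zero
  have hode : ∀ y, deriv (deriv w) y = w y - w y ^ p := fun y => by linarith [hw_eq y]
  have hw₂_comb : w₂ = fun y => -1 / (p - 1) * w y + -1 / 2 * y * deriv w y := by
    rw [hw₂]; funext y; ring
  have hp₁ : p - 1 ≠ 0 := by linarith
  have hwx : w x ≠ 0 := (hw_pos x).ne'
  rw [hw₂_comb, deriv_deriv_add_mul_id_mul_deriv hw hw'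
    (fun y => hasDerivAt_deriv_deriv_of_deriv_deriv_eq (hw_pos y).ne' hw hode), hode,
    Real.rpow_sub_one hwx]
  field_simp
  ring

/-- The function `w₂(x) = −w(x)/(p−1) − (1/2) x w'(x)` satisfies
`−w₂'' + w₂ − p w^(p−1) w₂ = w` on `ℝ`. -/
theorem w2_solves_linearized_equation
    (p : ℝ) (hp : 1 < p) (w : ℝ → ℝ)
    (hw_pos : ∀ x, 0 < w x)
    (hw_smooth : ContDiff ℝ 2 w)
    (hw_eq : ∀ x, deriv (deriv w) x - w x + w x ^ p = 0)
    (hdecay : ∃ C₀ > (0:ℝ), ∃ a > (0:ℝ),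
      ∀ x : ℝ, w x + |deriv w x| ≤ C₀ * Real.exp (-a * |x|))
    (w₂ : ℝ → ℝ)
    (hw₂ : w₂ = fun x => -(w x) / (p - 1) - (1 / 2) * x * deriv w x) :
    ∀ x : ℝ,
      -(deriv (deriv w₂) x) + w₂ x - p * w x ^ (p - 1) * w₂ x = w x :=
  w2_solves_linearized_equation_general p hp w hw_pos hw_smooth hw_eq w₂ hw₂
end

section
/- Define F(t, θ) = γ(Θ(t, θ)) + t n(Θ(t, θ)), let g₁₁ = ⟨∂F/∂t, ∂F/∂t⟩, g₁₂ = ⟨∂F/∂t, ∂F/∂θ⟩, g₂₂ = ⟨∂F/∂θ, ∂F/∂θ⟩, and let g = g₁₁ g₂₂ − g₁₂² be the determinant of the first fundamental form of F. Set q₁(θ) = Θ_tt(0, θ) γ'(θ). Then, uniformly for θ in any compact interval, g(t, θ) = 1 − 2 k(θ) t + ( ⟨q₁'(θ), γ'(θ)⟩ + k(θ)² ) t² + O(t³) as t → 0. -/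
open Real

private lemma cubic_bound {u u1 u2 u3 : ℝ → ℝ} {C : ℝ}
    (h1 : ∀ s, HasDerivAt u (u1 s) s) (h2 : ∀ s, HasDerivAt u1 (u2 s) s)
    (h3 : ∀ s, HasDerivAt u2 (u3 s) s)
    (hu0 : u 0 = 0) (h10 : u1 0 = 0) (h20 : u2 0 = 0)
    {t : ℝ} (hC : ∀ s, |s| ≤ |t| → |u3 s| ≤ C) :
    |u t| ≤ C * |t| ^ 3 := by
  have habs : ∀ r ∈ Set.uIcc (0:ℝ) t, |r| ≤ |t| := by
    intro r hr
    rcases Set.mem_uIcc.1 hr with ⟨ha, hb⟩ | ⟨ha, hb⟩ <;>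
      (rw [abs_le]; constructor <;>
        linarith [neg_abs_le t, le_abs_self t, abs_nonneg t])
  have key : ∀ (v v' : ℝ → ℝ) (D : ℝ), (∀ s, HasDerivAt v (v' s) s) → v 0 = 0 →
      (∀ r ∈ Set.uIcc (0:ℝ) t, |v' r| ≤ D) → ∀ r ∈ Set.uIcc (0:ℝ) t, |v r| ≤ D * |r| := by
    intro v v' D hv hv0 hb r hr
    have hconv : Convex ℝ (Set.uIcc (0:ℝ) t) := by
      rw [Set.uIcc]; exact convex_Icc _ _
    have := hconv.norm_image_sub_le_of_norm_hasDerivWithin_le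
      (f := v) (f' := v') (C := D)
      (fun x hx => (hv x).hasDerivWithinAt)
      (fun x hx => by simpa [Real.norm_eq_abs] using hb x hx)
      Set.left_mem_uIcc hr
    simpa [hv0, Real.norm_eq_abs] using this
  have hCnn : 0 ≤ C := le_trans (abs_nonneg _) (hC 0 (by simpa using abs_nonneg t))
  have stepA : ∀ r ∈ Set.uIcc (0:ℝ) t, |u2 r| ≤ C * |t| := by
    intro r hr
    have := key u2 u3 C h3 h20 (fun x hx => hC x (habs x hx)) r hr
    calc |u2 r| ≤ C * |r| := this
      _ ≤ C * |t| := by nlinarith [habs r hr, abs_nonneg r]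
  have stepB : ∀ r ∈ Set.uIcc (0:ℝ) t, |u1 r| ≤ (C * |t|) * |t| := by
    intro r hr
    have := key u1 u2 (C * |t|) h2 h10 stepA r hr
    calc |u1 r| ≤ C * |t| * |r| := this
      _ ≤ C * |t| * |t| := by nlinarith [habs r hr, mul_nonneg hCnn (abs_nonneg t)]
  have := key u u1 (C * |t| * |t|) h1 hu0 stepB t Set.right_mem_uIcc
  calc |u t| ≤ C * |t| * |t| * |t| := this
    _ = C * |t| ^ 3 := by ring

private noncomputable def pd (f : ℝ × ℝ → ℝ) (v : ℝ × ℝ) : ℝ × ℝ → ℝ := fun p => fderiv ℝ f p v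

private lemma pd_smooth {f : ℝ × ℝ → ℝ} (hf : ContDiff ℝ (⊤ : ℕ∞) f) (v : ℝ × ℝ) :
    ContDiff ℝ (⊤ : ℕ∞) (pd f v) :=
  (hf.fderiv_right (by exact_mod_cast le_top)).clm_apply contDiff_const

private lemma pd_t {f : ℝ × ℝ → ℝ} (hf : ContDiff ℝ (⊤ : ℕ∞) f) (t θ : ℝ) :
    HasDerivAt (fun s => f (s, θ)) (pd f (1, 0) (t, θ)) t := by
  have h1 : HasDerivAt (fun s : ℝ => (s, θ)) ((1 : ℝ), (0 : ℝ)) t :=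
    (hasDerivAt_id t).prodMk (hasDerivAt_const t θ)
  exact (hf.differentiable (by simp) (t, θ)).hasFDerivAt.comp_hasDerivAt t h1

private lemma pd_th {f : ℝ × ℝ → ℝ} (hf : ContDiff ℝ (⊤ : ℕ∞) f) (t θ : ℝ) :
    HasDerivAt (fun ψ => f (t, ψ)) (pd f (0, 1) (t, θ)) θ := by
  have h1 : HasDerivAt (fun ψ : ℝ => (t, ψ)) ((0 : ℝ), (1 : ℝ)) θ :=
    (hasDerivAt_const θ t).prodMk (hasDerivAt_id θ)
  exact (hf.differentiable (by simp) (t, θ)).hasFDerivAt.comp_hasDerivAt θ h1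

private lemma pd_swap {f : ℝ × ℝ → ℝ} (hf : ContDiff ℝ (⊤ : ℕ∞) f) (v w : ℝ × ℝ) :
    pd (pd f v) w = pd (pd f w) v := by
  have hfd : ContDiff ℝ (⊤ : ℕ∞) (fderiv ℝ f) := hf.fderiv_right (by exact_mod_cast le_top)
  have hd : Differentiable ℝ (fderiv ℝ f) := hfd.differentiable (by simp)
  have key : ∀ z q w' : ℝ × ℝ, pd (pd f z) w' q = fderiv ℝ (fderiv ℝ f) q w' z := by
    intro z q w'
    have h2 := ((hd q).hasFDerivAt.clm_apply (hasFDerivAt_const z q)).fderiv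
    show fderiv ℝ (fun y => fderiv ℝ f y z) q w' = _
    rw [show (fun y => fderiv ℝ f y z) = (fun y => (fderiv ℝ f y) ((fun _ => z) y)) from rfl,
      h2]
    simp
  funext p
  rw [show pd (pd f v) w p = pd (pd f v) w p from rfl]
  rw [key v p w, key w p v]
  exact second_derivative_symmetric (f := f) (f' := fderiv ℝ f)
    (fun y => (hf.differentiable (by simp) y).hasFDerivAt)
    (hd p).hasFDerivAt w v

private noncomputable def T1f (Θ : ℝ → ℝ → ℝ) : ℝ × ℝ → ℝ := pd (Function.uncurry Θ) (1, 0)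
private noncomputable def T2f (Θ : ℝ → ℝ → ℝ) : ℝ × ℝ → ℝ := pd (T1f Θ) (1, 0)
private noncomputable def Bf (Θ : ℝ → ℝ → ℝ) : ℝ × ℝ → ℝ := pd (Function.uncurry Θ) (0, 1)
private noncomputable def B1f (Θ : ℝ → ℝ → ℝ) : ℝ × ℝ → ℝ := pd (Bf Θ) (1, 0)
private noncomputable def B2f (Θ : ℝ → ℝ → ℝ) : ℝ × ℝ → ℝ := pd (B1f Θ) (1, 0)
private noncomputable def Hf (Θ : ℝ → ℝ → ℝ) (k : ℝ → ℝ) : ℝ × ℝ → ℝ :=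
  fun p => (Bf Θ p * (1 - p.1 * k (Function.uncurry Θ p))) ^ 2
private noncomputable def H1f (Θ : ℝ → ℝ → ℝ) (k : ℝ → ℝ) : ℝ × ℝ → ℝ := pd (Hf Θ k) (1, 0)
private noncomputable def H2f (Θ : ℝ → ℝ → ℝ) (k : ℝ → ℝ) : ℝ × ℝ → ℝ := pd (H1f Θ k) (1, 0)
private noncomputable def H3f (Θ : ℝ → ℝ → ℝ) (k : ℝ → ℝ) : ℝ × ℝ → ℝ := pd (H2f Θ k) (1, 0)

/-- Expansion of the determinant of the first fundamental form of
`F(t, θ) = γ(Θ(t, θ)) + t n(Θ(t, θ))`: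
`g(t, θ) = 1 − 2k(θ)t + (⟨q₁'(θ), γ'(θ)⟩ + k(θ)²) t² + O(t³)`,
uniformly for `θ` in compact intervals. -/
theorem first_fundamental_form_determinant_expansion
    (γ n : ℝ → ℝ × ℝ) (k : ℝ → ℝ)
    (hγ : ContDiff ℝ (⊤ : ℕ∞) γ) (hn : ContDiff ℝ (⊤ : ℕ∞) n) (hk : ContDiff ℝ (⊤ : ℕ∞) k)
    (hunit : ∀ θ : ℝ, (deriv γ θ).1 ^ 2 + (deriv γ θ).2 ^ 2 = 1)
    (hnunit : ∀ θ : ℝ, (n θ).1 ^ 2 + (n θ).2 ^ 2 = 1)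
    (hfrenet₁ : ∀ θ : ℝ, deriv (deriv γ) θ = k θ • n θ)
    (hfrenet₂ : ∀ θ : ℝ, deriv n θ = (-k θ) • deriv γ θ)
    (horient : ∀ θ : ℝ, (deriv γ θ).1 * (n θ).2 - (deriv γ θ).2 * (n θ).1 = 1)
    (Θ : ℝ → ℝ → ℝ) (hΘ : ContDiff ℝ (⊤ : ℕ∞) (Function.uncurry Θ))
    (hΘ0 : ∀ θ : ℝ, Θ 0 θ = θ)
    (hΘt : ∀ θ : ℝ, deriv (fun t => Θ t θ) 0 = 0)
    (F : ℝ → ℝ → ℝ × ℝ)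
    (hF : ∀ t θ : ℝ, F t θ = γ (Θ t θ) + t • n (Θ t θ))
    (g : ℝ → ℝ → ℝ)
    (hg : ∀ t θ : ℝ,
      g t θ =
        ((deriv (fun s => F s θ) t).1 ^ 2 + (deriv (fun s => F s θ) t).2 ^ 2) *
            ((deriv (fun ψ => F t ψ) θ).1 ^ 2 + (deriv (fun ψ => F t ψ) θ).2 ^ 2)
          - ((deriv (fun s => F s θ) t).1 * (deriv (fun ψ => F t ψ) θ).1
              + (deriv (fun s => F s θ) t).2 * (deriv (fun ψ => F t ψ) θ).2) ^ 2)
    (q₁ : ℝ → ℝ × ℝ)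
    (hq₁ : ∀ θ : ℝ, q₁ θ = (deriv (deriv (fun t => Θ t θ)) 0) • deriv γ θ)
    (a b : ℝ) :
    ∃ C > (0:ℝ), ∃ δ > (0:ℝ), ∀ θ ∈ Set.Icc a b, ∀ t : ℝ, |t| < δ →
      |g t θ -
          (1 - 2 * k θ * t
            + ((deriv q₁ θ).1 * (deriv γ θ).1 + (deriv q₁ θ).2 * (deriv γ θ).2
                + k θ ^ 2) * t ^ 2)|
        ≤ C * |t| ^ 3 := by
  -- downgrade smoothness to C^∞
  have hΘi : ContDiff ℝ (⊤ : ℕ∞) (Function.uncurry Θ) := hΘ.of_le (by simp)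
  have hγi : ContDiff ℝ (⊤ : ℕ∞) γ := hγ.of_le (by simp)
  have hni : ContDiff ℝ (⊤ : ℕ∞) n := hn.of_le (by simp)
  have hki : ContDiff ℝ (⊤ : ℕ∞) k := hk.of_le (by simp)
  have hγd : Differentiable ℝ γ := hγi.differentiable (by simp)
  have hnd : Differentiable ℝ n := hni.differentiable (by simp)
  have hkd : Differentiable ℝ k := hki.differentiable (by simp)
  have hγ'i : ContDiff ℝ (⊤ : ℕ∞) (deriv γ) := (contDiff_infty_iff_deriv.mp hγi).2
  have hk'i : ContDiff ℝ (⊤ : ℕ∞) (deriv k) := (contDiff_infty_iff_deriv.mp hki).2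
  have hγ'd : Differentiable ℝ (deriv γ) := hγ'i.differentiable (by simp)
  have hk'd : Differentiable ℝ (deriv k) := hk'i.differentiable (by simp)
  -- smoothness of partial derivatives
  have hT1s : ContDiff ℝ (⊤ : ℕ∞) (T1f Θ) := pd_smooth hΘi _
  have hT2s : ContDiff ℝ (⊤ : ℕ∞) (T2f Θ) := pd_smooth hT1s _
  have hBs : ContDiff ℝ (⊤ : ℕ∞) (Bf Θ) := pd_smooth hΘi _
  have hB1s : ContDiff ℝ (⊤ : ℕ∞) (B1f Θ) := pd_smooth hBs _
  have hHs : ContDiff ℝ (⊤ : ℕ∞) (Hf Θ k) :=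
    (hBs.mul (contDiff_const.sub (contDiff_fst.mul (hki.comp hΘi)))).pow 2
  have hH1s : ContDiff ℝ (⊤ : ℕ∞) (H1f Θ k) := pd_smooth hHs _
  have hH2s : ContDiff ℝ (⊤ : ℕ∞) (H2f Θ k) := pd_smooth hH1s _
  have hH3s : ContDiff ℝ (⊤ : ℕ∞) (H3f Θ k) := pd_smooth hH2s _
  -- slice derivatives
  have hslΘt : ∀ t θ : ℝ, HasDerivAt (fun s => Θ s θ) (T1f Θ (t, θ)) t :=
    fun t θ => pd_t hΘi t θ
  have hslΘh : ∀ t θ : ℝ, HasDerivAt (fun ψ => Θ t ψ) (Bf Θ (t, θ)) θ :=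
    fun t θ => pd_th hΘi t θ
  have hslT1t : ∀ t θ : ℝ, HasDerivAt (fun s => T1f Θ (s, θ)) (T2f Θ (t, θ)) t :=
    fun t θ => pd_t hT1s t θ
  have hslBt : ∀ t θ : ℝ, HasDerivAt (fun s => Bf Θ (s, θ)) (B1f Θ (t, θ)) t :=
    fun t θ => pd_t hBs t θ
  have hslB1t : ∀ t θ : ℝ, HasDerivAt (fun s => B1f Θ (s, θ)) (B2f Θ (t, θ)) t :=
    fun t θ => pd_t hB1s t θ
  -- values at t = 0
  have hT10 : ∀ θ : ℝ, T1f Θ (0, θ) = 0 :=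
    fun θ => ((hslΘt 0 θ).deriv).symm.trans (hΘt θ)
  have hB0 : ∀ θ : ℝ, Bf Θ (0, θ) = 1 := by
    intro θ
    have h : HasDerivAt (fun ψ => Θ 0 ψ) (Bf Θ (0, θ)) θ := hslΘh 0 θ
    rw [show (fun ψ => Θ 0 ψ) = fun ψ : ℝ => ψ from funext hΘ0] at h
    exact h.unique (hasDerivAt_id' θ)
  have hB1e : B1f Θ = pd (T1f Θ) (0, 1) := pd_swap hΘi (0, 1) (1, 0)
  have hB10 : ∀ θ : ℝ, B1f Θ (0, θ) = 0 := by
    intro θ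
    have h : HasDerivAt (fun ψ => T1f Θ (0, ψ)) (pd (T1f Θ) (0, 1) (0, θ)) θ := pd_th hT1s 0 θ
    rw [show (fun ψ => T1f Θ (0, ψ)) = fun _ : ℝ => (0 : ℝ) from funext fun ψ => hT10 ψ] at h
    rw [hB1e]
    exact h.unique (hasDerivAt_const θ (0 : ℝ))
  have hB2e : B2f Θ = pd (T2f Θ) (0, 1) := by
    show pd (B1f Θ) (1, 0) = _
    rw [hB1e]
    exact pd_swap hT1s (0, 1) (1, 0)
  have hB20 : ∀ θ : ℝ, B2f Θ (0, θ) = deriv (fun ψ => T2f Θ (0, ψ)) θ := by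
    intro θ
    rw [hB2e]
    exact ((pd_th hT2s 0 θ).deriv).symm
  -- q₁ in terms of T2f
  have hT2val : ∀ ψ : ℝ, deriv (deriv (fun t => Θ t ψ)) 0 = T2f Θ (0, ψ) := by
    intro ψ
    rw [show deriv (fun t => Θ t ψ) = fun t => T1f Θ (t, ψ) from
      funext fun t => (hslΘt t ψ).deriv]
    exact (hslT1t 0 ψ).deriv
  have hq1e : q₁ = fun ψ => T2f Θ (0, ψ) • deriv γ ψ := by
    funext ψ; rw [hq₁ ψ, hT2val ψ]
  have hμd : Differentiable ℝ (fun ψ => T2f Θ (0, ψ)) :=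
    (hT2s.comp (contDiff_const.prodMk contDiff_id)).differentiable (by simp)
  have hq1d : ∀ θ : ℝ, deriv q₁ θ =
      T2f Θ (0, θ) • deriv (deriv γ) θ + (deriv (fun ψ => T2f Θ (0, ψ)) θ) • deriv γ θ := by
    intro θ
    rw [hq1e]
    exact ((hμd θ).hasDerivAt.smul ((hγ'd θ).hasDerivAt)).deriv
  -- orthogonality
  have horth : ∀ θ : ℝ, (deriv γ θ).1 * (n θ).1 + (deriv γ θ).2 * (n θ).2 = 0 := by
    intro θ
    have hsq : ((deriv γ θ).1 * (n θ).1 + (deriv γ θ).2 * (n θ).2) ^ 2 = 0 := by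
      linear_combination ((n θ).1 ^ 2 + (n θ).2 ^ 2) * hunit θ + hnunit θ -
        ((deriv γ θ).1 * (n θ).2 - (deriv γ θ).2 * (n θ).1 + 1) * horient θ
    exact pow_eq_zero_iff two_ne_zero |>.mp hsq
  -- the dot product in the statement
  have hdot : ∀ θ : ℝ, (deriv q₁ θ).1 * (deriv γ θ).1 + (deriv q₁ θ).2 * (deriv γ θ).2
      = deriv (fun ψ => T2f Θ (0, ψ)) θ := by
    intro θ
    rw [hq1d θ, hfrenet₁ θ]
    simp only [Prod.fst_add, Prod.snd_add, Prod.smul_fst, Prod.smul_snd, smul_eq_mul]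
    linear_combination (deriv (fun ψ => T2f Θ (0, ψ)) θ) * hunit θ +
      (T2f Θ (0, θ) * k θ) * horth θ
  -- derivative of s ↦ k (Θ s θ)
  have hkΘ : ∀ t θ : ℝ, HasDerivAt (fun s => k (Θ s θ))
      (deriv k (Θ t θ) * T1f Θ (t, θ)) t :=
    fun t θ => (hkd (Θ t θ)).hasDerivAt.comp t (hslΘt t θ)
  -- derivatives of F
  have hFt : ∀ t θ : ℝ, HasDerivAt (fun s => F s θ)
      ((T1f Θ (t, θ) * (1 - t * k (Θ t θ))) • deriv γ (Θ t θ) + n (Θ t θ)) t := by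
    intro t θ
    rw [show (fun s => F s θ) = fun s => γ (Θ s θ) + s • n (Θ s θ) from
      funext fun s => hF s θ]
    have hA : HasDerivAt (fun s => γ (Θ s θ)) (T1f Θ (t, θ) • deriv γ (Θ t θ)) t :=
      HasDerivAt.scomp (hg := (hγd (Θ t θ)).hasDerivAt) (hh := hslΘt t θ)
    have hB : HasDerivAt (fun s => n (Θ s θ)) (T1f Θ (t, θ) • deriv n (Θ t θ)) t :=
      HasDerivAt.scomp (hg := (hnd (Θ t θ)).hasDerivAt) (hh := hslΘt t θ)
    have hC := (hasDerivAt_id t).smul hB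
    have hsum := hA.add hC
    have heq : T1f Θ (t, θ) • deriv γ (Θ t θ) +
        (t • (T1f Θ (t, θ) • deriv n (Θ t θ)) + (1 : ℝ) • n (Θ t θ))
        = (T1f Θ (t, θ) * (1 - t * k (Θ t θ))) • deriv γ (Θ t θ) + n (Θ t θ) := by
      rw [hfrenet₂ (Θ t θ)]
      module
    simp only [id_eq] at hsum
    rwa [heq] at hsum
  have hFθ : ∀ t θ : ℝ, HasDerivAt (fun ψ => F t ψ)
      ((Bf Θ (t, θ) * (1 - t * k (Θ t θ))) • deriv γ (Θ t θ)) θ := by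
    intro t θ
    rw [show (fun ψ => F t ψ) = fun ψ => γ (Θ t ψ) + t • n (Θ t ψ) from
      funext fun ψ => hF t ψ]
    have hA : HasDerivAt (fun ψ => γ (Θ t ψ)) (Bf Θ (t, θ) • deriv γ (Θ t θ)) θ :=
      HasDerivAt.scomp (hg := (hγd (Θ t θ)).hasDerivAt) (hh := hslΘh t θ)
    have hB : HasDerivAt (fun ψ => n (Θ t ψ)) (Bf Θ (t, θ) • deriv n (Θ t θ)) θ :=
      HasDerivAt.scomp (hg := (hnd (Θ t θ)).hasDerivAt) (hh := hslΘh t θ)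
    have hC := hB.const_smul t
    have hsum := hA.add hC
    have heq : Bf Θ (t, θ) • deriv γ (Θ t θ) + t • (Bf Θ (t, θ) • deriv n (Θ t θ))
        = (Bf Θ (t, θ) * (1 - t * k (Θ t θ))) • deriv γ (Θ t θ) := by
      rw [hfrenet₂ (Θ t θ)]
      module
    rwa [heq] at hsum
  -- g equals Hf
  have hgH : ∀ t θ : ℝ, g t θ = Hf Θ k (t, θ) := by
    intro t θ
    rw [hg t θ, (hFt t θ).deriv, (hFθ t θ).deriv]
    show _ = (Bf Θ (t, θ) * (1 - t * k (Θ t θ))) ^ 2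
    simp only [Prod.fst_add, Prod.snd_add, Prod.smul_fst, Prod.smul_snd, smul_eq_mul]
    linear_combination
      ((Bf Θ (t, θ) * (1 - t * k (Θ t θ))) ^ 2 * ((n (Θ t θ)).1 ^ 2 + (n (Θ t θ)).2 ^ 2)) *
          hunit (Θ t θ) +
        (Bf Θ (t, θ) * (1 - t * k (Θ t θ))) ^ 2 * hnunit (Θ t θ) -
        ((Bf Θ (t, θ) * (1 - t * k (Θ t θ))) ^ 2 *
            ((deriv γ (Θ t θ)).1 * (n (Θ t θ)).1 + (deriv γ (Θ t θ)).2 * (n (Θ t θ)).2)) *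
          horth (Θ t θ)
  -- formula for H1f
  have hH1f : ∀ t θ : ℝ, H1f Θ k (t, θ) =
      2 * (Bf Θ (t, θ) * (1 - t * k (Θ t θ))) *
        (B1f Θ (t, θ) * (1 - t * k (Θ t θ)) +
          Bf Θ (t, θ) * (-(1 * k (Θ t θ) + t * (deriv k (Θ t θ) * T1f Θ (t, θ))))) := by
    intro t θ
    have hm : HasDerivAt (fun s => 1 - s * k (Θ s θ))
        (-(1 * k (Θ t θ) + t * (deriv k (Θ t θ) * T1f Θ (t, θ)))) t := by
      have h := ((hasDerivAt_id t).mul (hkΘ t θ)).const_sub 1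
      simpa using h
    have hprod := (hslBt t θ).mul hm
    have hpow := hprod.pow 2
    have hL : HasDerivAt (fun s => Hf Θ k (s, θ)) (H1f Θ k (t, θ)) t := pd_t hHs t θ
    have := hL.unique hpow
    rw [this]
    norm_num
  have hH10 : ∀ θ : ℝ, H1f Θ k (0, θ) = -(2 * k θ) := by
    intro θ
    rw [hH1f 0 θ, hB0 θ, hB10 θ, hT10 θ, hΘ0 θ]
    ring
  -- value of H2f at t = 0
  have hH20 : ∀ θ : ℝ, H2f Θ k (0, θ) =
      2 * k θ ^ 2 + 2 * deriv (fun ψ => T2f Θ (0, ψ)) θ := by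
    intro θ
    have hL : HasDerivAt (fun s => H1f Θ k (s, θ)) (H2f Θ k (0, θ)) 0 := pd_t hH1s 0 θ
    rw [show (fun s => H1f Θ k (s, θ)) = fun s =>
        2 * (Bf Θ (s, θ) * (1 - s * k (Θ s θ))) *
          (B1f Θ (s, θ) * (1 - s * k (Θ s θ)) +
            Bf Θ (s, θ) * (-(1 * k (Θ s θ) + s * (deriv k (Θ s θ) * T1f Θ (s, θ)))))
      from funext fun s => hH1f s θ] at hL
    -- build the derivative of the explicit formula at 0
    have hm : HasDerivAt (fun s => 1 - s * k (Θ s θ))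
        (-(1 * k (Θ 0 θ) + 0 * (deriv k (Θ 0 θ) * T1f Θ (0, θ)))) 0 := by
      have h := ((hasDerivAt_id 0).mul (hkΘ 0 θ)).const_sub 1
      simpa using h
    have hk' : HasDerivAt (fun s => deriv k (Θ s θ))
        (deriv (deriv k) (Θ 0 θ) * T1f Θ (0, θ)) 0 :=
      HasDerivAt.comp (h₂ := deriv k) (hh₂ := (hk'd (Θ 0 θ)).hasDerivAt) (hh := hslΘt 0 θ)
    have hinner := hk'.mul (hslT1t 0 θ)
    have hsmul := (hasDerivAt_id 0).mul hinner
    have hw := ((hkΘ 0 θ).add hsmul).neg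
    have hw' := ((hkΘ 0 θ).const_mul 1).add hsmul
    have hwfull : HasDerivAt
        (fun s => -(1 * k (Θ s θ) + s * (deriv k (Θ s θ) * T1f Θ (s, θ))))
        (-(1 * (deriv k (Θ 0 θ) * T1f Θ (0, θ)) +
          (1 * (deriv k (Θ 0 θ) * T1f Θ (0, θ)) +
            0 * (deriv (deriv k) (Θ 0 θ) * T1f Θ (0, θ) * T1f Θ (0, θ) +
              deriv k (Θ 0 θ) * T2f Θ (0, θ))))) 0 := by
      have := (hw'.neg)
      exact this.congr_deriv (by simp)
    have hX := (hslBt 0 θ).mul hm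
    have hY := ((hslB1t 0 θ).mul hm).add ((hslBt 0 θ).mul hwfull)
    have hP := (hX.const_mul 2).mul hY
    have := hL.unique hP
    simp only [Pi.mul_apply, Pi.add_apply] at this
    rw [this, hB0 θ, hB10 θ, hT10 θ, hΘ0 θ, hB20 θ]
    norm_num
    ring
  have hH00 : ∀ θ : ℝ, Hf Θ k (0, θ) = 1 := by
    intro θ
    show (Bf Θ (0, θ) * (1 - (0:ℝ) * k (Θ 0 θ))) ^ 2 = 1
    rw [hB0 θ]
    ring
  -- uniform bound on the third derivative
  obtain ⟨C0, hC0⟩ := ((isCompact_Icc (a := (-1:ℝ)) (b := 1)).prod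
    (isCompact_Icc (a := a) (b := b))).exists_bound_of_continuousOn
    (hH3s.continuous.continuousOn (f := H3f Θ k))
  refine ⟨max C0 0 + 1, by positivity, 1, one_pos, fun θ hθ t ht => ?_⟩
  have hcoef : (deriv q₁ θ).1 * (deriv γ θ).1 + (deriv q₁ θ).2 * (deriv γ θ).2 + k θ ^ 2
      = deriv (fun ψ => T2f Θ (0, ψ)) θ + k θ ^ 2 := by rw [hdot θ]
  set c : ℝ := deriv (fun ψ => T2f Θ (0, ψ)) θ + k θ ^ 2 with hcdef
  have hkey : |Hf Θ k (t, θ) - (1 - 2 * k θ * t + c * t ^ 2)| ≤ (max C0 0 + 1) * |t| ^ 3 := by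
    refine cubic_bound (u := fun s => Hf Θ k (s, θ) - (1 - 2 * k θ * s + c * s ^ 2))
      (u1 := fun s => H1f Θ k (s, θ) - (-(2 * k θ) + c * (2 * s)))
      (u2 := fun s => H2f Θ k (s, θ) - 2 * c)
      (u3 := fun s => H3f Θ k (s, θ)) ?_ ?_ ?_ ?_ ?_ ?_ ?_
    · intro s
      have hp : HasDerivAt (fun s : ℝ => 1 - 2 * k θ * s + c * s ^ 2)
          (-(2 * k θ) + c * (2 * s)) s := by
        have h1 := (((hasDerivAt_id s).const_mul (2 * k θ)).const_sub 1).add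
          ((hasDerivAt_pow 2 s).const_mul c)
        have h2 : -(2 * k θ * 1) + c * (↑2 * s ^ (2 - 1)) = -(2 * k θ) + c * (2 * s) := by
          norm_num
        rw [← h2]
        exact h1
      exact (pd_t hHs s θ).sub hp
    · intro s
      have hp : HasDerivAt (fun s : ℝ => -(2 * k θ) + c * (2 * s)) (2 * c) s := by
        have h1 := (((hasDerivAt_id s).const_mul (2:ℝ)).const_mul c).const_add (-(2 * k θ))
        have h2 : c * (2 * 1) = 2 * c := by ring
        rw [← h2]
        simpa using h1
      exact (pd_t hH1s s θ).sub hp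
    · intro s
      exact (pd_t hH2s s θ).sub_const (2 * c)
    · show Hf Θ k (0, θ) - (1 - 2 * k θ * 0 + c * 0 ^ 2) = 0
      rw [hH00 θ]; ring
    · show H1f Θ k (0, θ) - (-(2 * k θ) + c * (2 * 0)) = 0
      rw [hH10 θ]; ring
    · show H2f Θ k (0, θ) - 2 * c = 0
      rw [hH20 θ, hcdef]; ring
    · intro s hs
      have hs1 : |s| ≤ 1 := le_trans hs (le_of_lt ht)
      have hmem : (s, θ) ∈ Set.Icc (-1:ℝ) 1 ×ˢ Set.Icc a b := by
        refine ⟨?_, hθ⟩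
        rw [Set.mem_Icc]
        exact abs_le.1 hs1
      have := hC0 _ hmem
      rw [Real.norm_eq_abs] at this
      calc |H3f Θ k (s, θ)| ≤ C0 := this
        _ ≤ max C0 0 + 1 := by
            have := le_max_left C0 (0:ℝ); linarith
  rw [hgH t θ, hcoef]
  exact hkey
end

section
/- There exists a constant C > 0, depending only on q₁, q₂, k₁, k₂, such that every twice continuously differentiable y : [0, 1] → ℝ satisfying y'' + q₁ y' + q₂ y = −λ y on [0, 1] with λ ≥ 1, with the Robin boundary conditions y'(0) + k₁ y(0) = 0 and y'(1) + k₂ y(1) = 0, and normalized by ∫₀¹ y(s)² ds = 1, obeys sup_{[0,1]} |y| ≤ C and sup_{[0,1]} |y'| ≤ C √λ. -/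
/-! With `M₁, M₂` bounds for `|q₁|, |q₂|` on `[0, 1]`, the energy `E = y'² + λ y²` satisfies
`|E'| ≤ (2 M₁ + M₂) E`: the `λ`-terms of `E'` cancel through the equation, and `λ ≥ 1`. A two-sided
Grönwall argument then gives `E ≤ exp (2 M₁ + M₂) ∫₀¹ E = exp (2 M₁ + M₂) (∫₀¹ y'² + λ)`.
Integrating `y y''` by parts, the Robin conditions turn the boundary terms into
`k₁ y(0)² - k₂ y(1)²`, and `y(x)² ≤ ∫₀¹ y² + ∫₀¹ |(y²)'|`; absorbing `∫₀¹ |2 y y'|` into `∫₀¹ y'²`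
gives `∫₀¹ y'² ≤ 2 λ + O(1)`. Hence `E ≤ C² λ`, which bounds `y²` by `C²` and `y'²` by `C² λ`. -/

open Real Set MeasureTheory intervalIntegral
open scoped Interval

theorem antitoneOn_mul_exp_neg_mul_of_deriv_le {f f' : ℝ → ℝ} {a b K : ℝ}
    (hf : ContinuousOn f (Icc a b)) (hf' : ∀ x ∈ Ioo a b, HasDerivAt f (f' x) x)
    (hle : ∀ x ∈ Ioo a b, f' x ≤ K * f x) :
    AntitoneOn (fun t => f t * exp (-(K * t))) (Icc a b) := by
  have hderiv : ∀ x ∈ Ioo a b, HasDerivAt (fun t => f t * exp (-(K * t)))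
      (f' x * exp (-(K * x)) + f x * (exp (-(K * x)) * -K)) x := fun x hx =>
    (hf' x hx).mul (by simpa using ((hasDerivAt_id x).const_mul K).neg.exp)
  refine antitoneOn_of_deriv_nonpos (convex_Icc a b) (hf.mul (by fun_prop)) ?_ ?_ <;>
    rw [interior_Icc]
  · exact fun x hx => (hderiv x hx).differentiableAt.differentiableWithinAt
  · intro x hx
    rw [(hderiv x hx).deriv]
    nlinarith [hle x hx, exp_pos (-(K * x))]

theorem le_exp_mul_sub_mul_of_deriv_le {f f' : ℝ → ℝ} {a b K s t : ℝ}
    (hf : ContinuousOn f (Icc a b)) (hf' : ∀ x ∈ Ioo a b, HasDerivAt f (f' x) x)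
    (hle : ∀ x ∈ Ioo a b, f' x ≤ K * f x) (hs : s ∈ Icc a b) (ht : t ∈ Icc a b) (hts : t ≤ s) :
    f s ≤ exp (K * (s - t)) * f t := calc
  f s = f s * exp (-(K * s)) * exp (K * s) := by rw [mul_assoc, ← exp_add]; simp
  _ ≤ f t * exp (-(K * t)) * exp (K * s) :=
    mul_le_mul_of_nonneg_right (antitoneOn_mul_exp_neg_mul_of_deriv_le hf hf' hle ht hs hts)
      (exp_pos _).le
  _ = exp (K * (s - t)) * f t := by
    rw [mul_assoc, ← exp_add, mul_comm, mul_sub]; ring_nf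

theorem le_exp_mul_abs_sub_mul_of_abs_deriv_le {f f' : ℝ → ℝ} {a b K s t : ℝ}
    (hf : ContinuousOn f (Icc a b)) (hf' : ∀ x ∈ Ioo a b, HasDerivAt f (f' x) x)
    (hle : ∀ x ∈ Ioo a b, |f' x| ≤ K * f x) (hs : s ∈ Icc a b) (ht : t ∈ Icc a b) :
    f s ≤ exp (K * |s - t|) * f t := by
  rcases le_total t s with hts | hst
  · rw [abs_of_nonneg (sub_nonneg.mpr hts)]
    exact le_exp_mul_sub_mul_of_deriv_le hf hf' (fun x hx => (le_abs_self _).trans (hle x hx))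
      hs ht hts
  · have hback := le_exp_mul_sub_mul_of_deriv_le (f := -f) (f' := -f') (K := -K) hf.neg
      (fun x hx => (hf' x hx).neg) (fun x hx => by simpa using (neg_le_abs _).trans (hle x hx))
      ht hs hst
    simp only [Pi.neg_apply, mul_neg, neg_le_neg_iff] at hback
    rw [abs_sub_comm, abs_of_nonneg (sub_nonneg.mpr hst)]
    calc f s = exp (K * (t - s)) * (exp (-K * (t - s)) * f s) := by
          rw [← mul_assoc, ← exp_add]; simp
      _ ≤ exp (K * (t - s)) * f t := by gcongr

theorem mul_le_integral_add_mul_integral_abs_deriv {f f' : ℝ → ℝ} {a b x : ℝ} (hab : a ≤ b)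
    (hf : ∀ t ∈ Icc a b, HasDerivAt f (f' t) t) (hf' : IntervalIntegrable f' volume a b)
    (hx : x ∈ Icc a b) :
    (b - a) * f x ≤ (∫ t in a..b, f t) + (b - a) * ∫ t in a..b, |f' t| := by
  have hsub : ∀ t ∈ Icc a b, uIcc t x ⊆ Icc a b := fun t ht => uIcc_subset_Icc ht hx
  have hpt : ∀ t ∈ Icc a b, f x ≤ f t + ∫ u in a..b, |f' u| := by
    intro t ht
    have hftc : ∫ u in t..x, f' u = f x - f t :=
      integral_eq_sub_of_hasDerivAt (fun u hu => hf u (hsub t ht hu))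
        (hf'.mono_set (by rw [uIcc_of_le hab]; exact hsub t ht))
    have hvar : |∫ u in t..x, f' u| ≤ ∫ u in a..b, |f' u| := calc
      _ ≤ ∫ u in Ι t x, |f' u| := by simpa using norm_integral_le_integral_norm_uIoc (f := f')
      _ ≤ ∫ u in Ioc a b, |f' u| :=
        setIntegral_mono_set (by simpa [uIoc_of_le hab] using hf'.abs.def')
          (ae_of_all _ fun _ => abs_nonneg _) <| LE.le.eventuallyLE <| by
            rw [← uIoc_of_le hab]
            exact uIoc_subset_uIoc_of_uIcc_subset_uIcc (by rw [uIcc_of_le hab]; exact hsub t ht)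
      _ = ∫ u in a..b, |f' u| := (integral_of_le hab).symm
    linarith [le_abs_self (∫ u in t..x, f' u)]
  have hcont : ContinuousOn f (Icc a b) := fun t ht => (hf t ht).continuousAt.continuousWithinAt
  calc (b - a) * f x = ∫ _ in a..b, f x := by simp
    _ ≤ ∫ t in a..b, (f t + ∫ u in a..b, |f' u|) :=
      integral_mono_on hab intervalIntegrable_const
        ((hcont.intervalIntegrable_of_Icc hab).add intervalIntegrable_const) hpt
    _ = (∫ t in a..b, f t) + (b - a) * ∫ t in a..b, |f' t| := by
      rw [integral_add (hcont.intervalIntegrable_of_Icc hab) intervalIntegrable_const]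
      simp

noncomputable def energy (y : ℝ → ℝ) (lam s : ℝ) : ℝ := deriv y s ^ 2 + lam * y s ^ 2

variable {q₁ q₂ y : ℝ → ℝ} {k₁ k₂ lam M₁ M₂ s : ℝ}

theorem hasDerivAt_energy_s10 (hy : ContDiff ℝ 2 y) (s : ℝ) :
    HasDerivAt (energy y lam)
      (2 * deriv y s * deriv (deriv y) s + lam * (2 * y s * deriv y s)) s := by
  have hy' : HasDerivAt y (deriv y s) s := (hy.differentiable (by norm_num) s).hasDerivAt
  have hy'' : HasDerivAt (deriv y) (deriv (deriv y) s) s :=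
    ((hy.deriv' (n := 1)).differentiable (by norm_num) s).hasDerivAt
  exact ((hy''.pow 2).add ((hy'.pow 2).const_mul lam)).congr_deriv (by ring)

theorem abs_deriv_energy_le (hlam : 1 ≤ lam)
    (hode : deriv (deriv y) s + q₁ s * deriv y s + q₂ s * y s = -lam * y s)
    (hq₁ : |q₁ s| ≤ M₁) (hq₂ : |q₂ s| ≤ M₂) :
    |2 * deriv y s * deriv (deriv y) s + lam * (2 * y s * deriv y s)|
      ≤ (2 * M₁ + M₂) * energy y lam s := by
  set u := y s
  set v := deriv y s
  have hsubst : 2 * v * deriv (deriv y) s + lam * (2 * u * v)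
      = -(2 * q₁ s * v ^ 2) - q₂ s * (2 * u * v) := by
    rw [show deriv (deriv y) s = -lam * u - q₁ s * v - q₂ s * u by linarith]; ring
  have huv : |2 * u * v| ≤ u ^ 2 + v ^ 2 := by
    rw [abs_le]; constructor <;> nlinarith [sq_nonneg (u + v), sq_nonneg (u - v)]
  rw [hsubst, energy]
  calc |-(2 * q₁ s * v ^ 2) - q₂ s * (2 * u * v)|
      ≤ 2 * |q₁ s| * v ^ 2 + |q₂ s| * |2 * u * v| := by
        refine (abs_sub _ _).trans ?_
        simp [abs_mul, abs_of_nonneg (sq_nonneg v)]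
    _ ≤ 2 * M₁ * v ^ 2 + M₂ * (u ^ 2 + v ^ 2) := by gcongr; exact (abs_nonneg _).trans hq₂
    _ ≤ (2 * M₁ + M₂) * (v ^ 2 + lam * u ^ 2) := by
        have hM₁ := (abs_nonneg _).trans hq₁
        have hM₂ := (abs_nonneg _).trans hq₂
        nlinarith [mul_nonneg hM₁ (sq_nonneg u), mul_nonneg hM₂ (sq_nonneg u)]

theorem energy_nonneg (hlam : 0 ≤ lam) (s : ℝ) : 0 ≤ energy y lam s := by
  unfold energy; positivity

theorem energy_le_exp_mul_integral_energy (hy : ContDiff ℝ 2 y) (hlam : 1 ≤ lam)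
    (hode : ∀ s ∈ Icc (0 : ℝ) 1,
      deriv (deriv y) s + q₁ s * deriv y s + q₂ s * y s = -lam * y s)
    (hq₁ : ∀ s ∈ Icc (0 : ℝ) 1, |q₁ s| ≤ M₁) (hq₂ : ∀ s ∈ Icc (0 : ℝ) 1, |q₂ s| ≤ M₂)
    (hs : s ∈ Icc (0 : ℝ) 1) :
    energy y lam s ≤ exp (2 * M₁ + M₂) * ∫ t in (0 : ℝ)..1, energy y lam t := by
  have hE : Continuous (energy y lam) := by
    have := hy.continuous
    have := hy.continuous_deriv (by norm_num)
    unfold energy; fun_prop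
  have hK : 0 ≤ 2 * M₁ + M₂ := by
    have := (abs_nonneg _).trans (hq₁ 0 (left_mem_Icc.2 zero_le_one))
    have := (abs_nonneg _).trans (hq₂ 0 (left_mem_Icc.2 zero_le_one))
    linarith
  have hcmp : ∀ t ∈ Icc (0 : ℝ) 1, energy y lam s ≤ exp (2 * M₁ + M₂) * energy y lam t := by
    intro t ht
    refine (le_exp_mul_abs_sub_mul_of_abs_deriv_le hE.continuousOn
      (fun x _ => hasDerivAt_energy_s10 hy x) (fun x hx => abs_deriv_energy_le hlam
        (hode x (Ioo_subset_Icc_self hx)) (hq₁ x (Ioo_subset_Icc_self hx))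
        (hq₂ x (Ioo_subset_Icc_self hx))) hs ht).trans ?_
    have hst : |s - t| ≤ 1 := abs_sub_le_iff.2 ⟨by linarith [hs.2, ht.1], by linarith [hs.1, ht.2]⟩
    gcongr
    · exact energy_nonneg (by linarith) t
    · exact mul_le_of_le_one_right hK hst
  calc energy y lam s = ∫ _ in (0 : ℝ)..1, energy y lam s := by simp
    _ ≤ ∫ t in (0 : ℝ)..1, exp (2 * M₁ + M₂) * energy y lam t :=
      integral_mono_on zero_le_one intervalIntegrable_const
        ((hE.const_mul _).intervalIntegrable _ _) hcmp
    _ = exp (2 * M₁ + M₂) * ∫ t in (0 : ℝ)..1, energy y lam t := integral_const_mul _ _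

theorem integral_deriv_sq_eq_of_robin (hy : ContDiff ℝ 2 y)
    (hb₀ : deriv y 0 + k₁ * y 0 = 0) (hb₁ : deriv y 1 + k₂ * y 1 = 0) :
    ∫ t in (0 : ℝ)..1, deriv y t ^ 2
      = k₁ * y 0 ^ 2 - k₂ * y 1 ^ 2 - ∫ t in (0 : ℝ)..1, y t * deriv (deriv y) t := by
  have hibp := integral_mul_deriv_eq_deriv_mul (a := 0) (b := 1)
    (fun x _ => (hy.differentiable (by norm_num) x).hasDerivAt)
    (fun x _ => ((hy.deriv' (n := 1)).differentiable (by norm_num) x).hasDerivAt)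
    ((hy.continuous_deriv (by norm_num)).intervalIntegrable _ _)
    (((hy.deriv' (n := 1)).continuous_deriv le_rfl).intervalIntegrable _ _)
  simp only [← sq] at hibp
  linear_combination hibp + y 1 * hb₁ - y 0 * hb₀

theorem sq_le_integral_sq_add_integral_abs (hy : ContDiff ℝ 1 y) {x : ℝ} (hx : x ∈ Icc (0 : ℝ) 1) :
    y x ^ 2 ≤ (∫ t in (0 : ℝ)..1, y t ^ 2) + ∫ t in (0 : ℝ)..1, |2 * y t * deriv y t| := by
  have hy' := hy.continuous_deriv le_rfl
  have := hy.continuous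
  simpa using mul_le_integral_add_mul_integral_abs_deriv zero_le_one
    (fun t _ => ((hy.differentiable one_ne_zero t).hasDerivAt.pow 2).congr_deriv (by ring))
    ((by fun_prop : Continuous fun t => 2 * y t * deriv y t).intervalIntegrable _ _) hx

theorem mul_integral_abs_mul_deriv_le (hy : ContDiff ℝ 1 y)
    (hnorm : ∫ t in (0 : ℝ)..1, y t ^ 2 = 1) (c : ℝ) :
    c * ∫ t in (0 : ℝ)..1, |2 * y t * deriv y t|
      ≤ (∫ t in (0 : ℝ)..1, deriv y t ^ 2) / 2 + 2 * c ^ 2 := by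
  have := hy.continuous
  have := hy.continuous_deriv le_rfl
  calc c * ∫ t in (0 : ℝ)..1, |2 * y t * deriv y t|
      ≤ ∫ t in (0 : ℝ)..1, |c| * |2 * y t * deriv y t| := by
        rw [intervalIntegral.integral_const_mul]
        gcongr
        · exact intervalIntegral.integral_nonneg zero_le_one fun _ _ => abs_nonneg _
        · exact le_abs_self c
    _ ≤ ∫ t in (0 : ℝ)..1, (deriv y t ^ 2 / 2 + 2 * c ^ 2 * y t ^ 2) := by
      refine integral_mono_on zero_le_one (Continuous.intervalIntegrable (by fun_prop) _ _)
        (Continuous.intervalIntegrable (by fun_prop) _ _) fun t _ => ?_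
      rw [← abs_mul, abs_le]
      constructor <;>
        nlinarith [sq_nonneg (deriv y t + 2 * c * y t), sq_nonneg (deriv y t - 2 * c * y t)]
    _ = (∫ t in (0 : ℝ)..1, deriv y t ^ 2) / 2 + 2 * c ^ 2 := by
      rw [intervalIntegral.integral_add (Continuous.intervalIntegrable (by fun_prop) _ _)
        (Continuous.intervalIntegrable (by fun_prop) _ _), intervalIntegral.integral_div,
        intervalIntegral.integral_const_mul, hnorm, mul_one]

theorem neg_integral_mul_deriv_deriv_le (hy : ContDiff ℝ 2 y)
    (hode : ∀ s ∈ Icc (0 : ℝ) 1,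
      deriv (deriv y) s + q₁ s * deriv y s + q₂ s * y s = -lam * y s)
    (hq₁ : ∀ s ∈ Icc (0 : ℝ) 1, |q₁ s| ≤ M₁) (hq₂ : ∀ s ∈ Icc (0 : ℝ) 1, |q₂ s| ≤ M₂)
    (hnorm : ∫ t in (0 : ℝ)..1, y t ^ 2 = 1) :
    -∫ t in (0 : ℝ)..1, y t * deriv (deriv y) t
      ≤ lam + M₂ + M₁ / 2 * ∫ t in (0 : ℝ)..1, |2 * y t * deriv y t| := by
  have := hy.continuous
  have := hy.continuous_deriv (by norm_num)
  have := (hy.deriv' (n := 1)).continuous_deriv le_rfl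
  calc -∫ t in (0 : ℝ)..1, y t * deriv (deriv y) t
      = ∫ t in (0 : ℝ)..1, -(y t * deriv (deriv y) t) := intervalIntegral.integral_neg.symm
    _ ≤ ∫ t in (0 : ℝ)..1, ((lam + M₂) * y t ^ 2 + M₁ / 2 * |2 * y t * deriv y t|) := by
      refine integral_mono_on zero_le_one (Continuous.intervalIntegrable (by fun_prop) _ _)
        (Continuous.intervalIntegrable (by fun_prop) _ _) fun t ht => ?_
      have hy'' : deriv (deriv y) t = -lam * y t - q₁ t * deriv y t - q₂ t * y t := by
        linarith [hode t ht]
      have hyy'' : -(y t * deriv (deriv y) t)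
          = lam * y t ^ 2 + q₁ t / 2 * (2 * y t * deriv y t) + q₂ t * y t ^ 2 := by
        rw [hy'']; ring
      have h₁ : q₁ t / 2 * (2 * y t * deriv y t) ≤ M₁ / 2 * |2 * y t * deriv y t| :=
        (le_abs_self _).trans <| by
          rw [abs_mul, abs_div, abs_two]; gcongr; exact hq₁ t ht
      have h₂ : q₂ t * y t ^ 2 ≤ M₂ * y t ^ 2 :=
        mul_le_mul_of_nonneg_right ((le_abs_self _).trans (hq₂ t ht)) (sq_nonneg _)
      linarith
    _ = lam + M₂ + M₁ / 2 * ∫ t in (0 : ℝ)..1, |2 * y t * deriv y t| := by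
      rw [intervalIntegral.integral_add (Continuous.intervalIntegrable (by fun_prop) _ _)
        (Continuous.intervalIntegrable (by fun_prop) _ _), intervalIntegral.integral_const_mul,
        intervalIntegral.integral_const_mul, hnorm, mul_one]

theorem integral_deriv_sq_le (hy : ContDiff ℝ 2 y)
    (hode : ∀ s ∈ Icc (0 : ℝ) 1,
      deriv (deriv y) s + q₁ s * deriv y s + q₂ s * y s = -lam * y s)
    (hq₁ : ∀ s ∈ Icc (0 : ℝ) 1, |q₁ s| ≤ M₁) (hq₂ : ∀ s ∈ Icc (0 : ℝ) 1, |q₂ s| ≤ M₂)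
    (hb₀ : deriv y 0 + k₁ * y 0 = 0) (hb₁ : deriv y 1 + k₂ * y 1 = 0)
    (hnorm : ∫ t in (0 : ℝ)..1, y t ^ 2 = 1) :
    ∫ t in (0 : ℝ)..1, deriv y t ^ 2
      ≤ 2 * (lam + |k₁| + |k₂| + M₂ + 2 * (|k₁| + |k₂| + M₁ / 2) ^ 2) := by
  have hy₁ : ContDiff ℝ 1 y := hy.of_le one_le_two
  have hD := integral_deriv_sq_eq_of_robin hy hb₀ hb₁
  have hyy'' := neg_integral_mul_deriv_deriv_le hy hode hq₁ hq₂ hnorm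
  have hJ := mul_integral_abs_mul_deriv_le hy₁ hnorm (|k₁| + |k₂| + M₁ / 2)
  have htrace : ∀ x ∈ Icc (0 : ℝ) 1, y x ^ 2 ≤ 1 + ∫ t in (0 : ℝ)..1, |2 * y t * deriv y t| :=
    fun x hx => (sq_le_integral_sq_add_integral_abs hy₁ hx).trans_eq (by rw [hnorm])
  have h₀ := mul_le_mul (le_abs_self k₁) (htrace 0 (left_mem_Icc.2 zero_le_one))
    (sq_nonneg _) (abs_nonneg _)
  have h₁ := mul_le_mul (neg_le_abs k₂) (htrace 1 (right_mem_Icc.2 zero_le_one))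
    (sq_nonneg _) (abs_nonneg _)
  linarith

theorem integral_energy_le (hy : ContDiff ℝ 2 y) (hlam : 1 ≤ lam)
    (hode : ∀ s ∈ Icc (0 : ℝ) 1,
      deriv (deriv y) s + q₁ s * deriv y s + q₂ s * y s = -lam * y s)
    (hq₁ : ∀ s ∈ Icc (0 : ℝ) 1, |q₁ s| ≤ M₁) (hq₂ : ∀ s ∈ Icc (0 : ℝ) 1, |q₂ s| ≤ M₂)
    (hb₀ : deriv y 0 + k₁ * y 0 = 0) (hb₁ : deriv y 1 + k₂ * y 1 = 0)
    (hnorm : ∫ t in (0 : ℝ)..1, y t ^ 2 = 1) :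
    ∫ t in (0 : ℝ)..1, energy y lam t
      ≤ (3 + 2 * (|k₁| + |k₂| + M₂ + 2 * (|k₁| + |k₂| + M₁ / 2) ^ 2)) * lam := by
  have := hy.continuous
  have := hy.continuous_deriv (by norm_num)
  have hint : ∫ t in (0 : ℝ)..1, energy y lam t = (∫ t in (0 : ℝ)..1, deriv y t ^ 2) + lam := by
    unfold energy
    rw [intervalIntegral.integral_add (Continuous.intervalIntegrable (by fun_prop) _ _)
      (Continuous.intervalIntegrable (by fun_prop) _ _), intervalIntegral.integral_const_mul,
      hnorm, mul_one]
  have hM₂ : 0 ≤ M₂ := (abs_nonneg _).trans (hq₂ 0 (left_mem_Icc.2 zero_le_one))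
  have hB : 0 ≤ |k₁| + |k₂| + M₂ + 2 * (|k₁| + |k₂| + M₁ / 2) ^ 2 := by positivity
  rw [hint]
  nlinarith [integral_deriv_sq_le hy hode hq₁ hq₂ hb₀ hb₁ hnorm]

theorem abs_le_sqrt_of_energy_le {B : ℝ} (hlam : 0 < lam) (h : energy y lam s ≤ B * lam) :
    |y s| ≤ √B ∧ |deriv y s| ≤ √B * √lam := by
  unfold energy at h
  refine ⟨abs_le_sqrt (le_of_mul_le_mul_right ?_ hlam), ?_⟩
  · nlinarith [sq_nonneg (deriv y s)]
  · rw [← sqrt_mul' B hlam.le]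
    exact abs_le_sqrt (by nlinarith [sq_nonneg (y s)])

/-- Uniform bounds for normalized Robin eigenfunctions:
`sup |y| ≤ C` and `sup |y'| ≤ C √λ`, with `C` depending only on `q₁, q₂, k₁, k₂`. -/
theorem eigenfunction_uniform_bounds
    (q₁ q₂ : ℝ → ℝ)
    (hq₁ : ContinuousOn q₁ (Set.Icc 0 1))
    (hq₂ : ContinuousOn q₂ (Set.Icc 0 1))
    (k₁ k₂ : ℝ) :
    ∃ C > (0:ℝ), ∀ (y : ℝ → ℝ) (lam : ℝ),
      ContDiff ℝ 2 y → 1 ≤ lam →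
      (∀ s ∈ Set.Icc (0:ℝ) 1,
        deriv (deriv y) s + q₁ s * deriv y s + q₂ s * y s = -lam * y s) →
      deriv y 0 + k₁ * y 0 = 0 →
      deriv y 1 + k₂ * y 1 = 0 →
      (∫ s in (0:ℝ)..1, y s ^ 2) = 1 →
      (∀ s ∈ Set.Icc (0:ℝ) 1, |y s| ≤ C) ∧
      (∀ s ∈ Set.Icc (0:ℝ) 1, |deriv y s| ≤ C * Real.sqrt lam) := by
  obtain ⟨M₁, hM₁⟩ := isCompact_Icc.exists_bound_of_continuousOn hq₁
  obtain ⟨M₂, hM₂⟩ := isCompact_Icc.exists_bound_of_continuousOn hq₂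
  simp only [Real.norm_eq_abs] at hM₁ hM₂
  set A := 3 + 2 * (|k₁| + |k₂| + M₂ + 2 * (|k₁| + |k₂| + M₁ / 2) ^ 2)
  have hA : 0 < A := by
    have := (abs_nonneg _).trans (hM₂ 0 (left_mem_Icc.2 zero_le_one))
    positivity
  refine ⟨√(exp (2 * M₁ + M₂) * A), by positivity, fun y lam hy hlam hode hb₀ hb₁ hnorm => ?_⟩
  have henergy : ∀ s ∈ Icc (0 : ℝ) 1, energy y lam s ≤ exp (2 * M₁ + M₂) * A * lam :=
    fun s hs => calc
      energy y lam s ≤ exp (2 * M₁ + M₂) * ∫ t in (0 : ℝ)..1, energy y lam t :=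
        energy_le_exp_mul_integral_energy hy hlam hode hM₁ hM₂ hs
      _ ≤ exp (2 * M₁ + M₂) * (A * lam) := by
        gcongr; exact integral_energy_le hy hlam hode hM₁ hM₂ hb₀ hb₁ hnorm
      _ = exp (2 * M₁ + M₂) * A * lam := by ring
  have hlam₀ : 0 < lam := zero_lt_one.trans_le hlam
  exact ⟨fun s hs => (abs_le_sqrt_of_energy_le hlam₀ (henergy s hs)).1,
    fun s hs => (abs_le_sqrt_of_energy_le hlam₀ (henergy s hs)).2⟩
end

section
/- For each c > 0 there exist ε₀ > 0 and c' > 0 such that for every 0 < ε < ε₀ satisfying the gap condition |ε² j² − λ_*| ≥ c ε for all j ∈ ℕ, one has |sin( √λ₀ ℓ / ε )| ≥ c'. -/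
open Real

/-- Under the gap condition `|ε² j² − λ_*| ≥ c ε` for all `j ∈ ℕ`
(with `λ_* = λ₀ ℓ² / π²`), the quantity `|sin(√λ₀ ℓ / ε)|` is bounded away from zero. -/
theorem sin_bounded_below_under_gap_condition
    (lam₀ ℓ : ℝ) (hlam₀ : 0 < lam₀) (hℓ : 0 < ℓ) :
    ∀ c > (0:ℝ), ∃ ε₀ > (0:ℝ), ∃ c' > (0:ℝ), ∀ ε : ℝ, 0 < ε → ε < ε₀ →
      (∀ j : ℕ, |ε ^ 2 * (j : ℝ) ^ 2 - lam₀ * ℓ ^ 2 / π ^ 2| ≥ c * ε) →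
      |Real.sin (Real.sqrt lam₀ * ℓ / ε)| ≥ c' := by
  intro c hc
  set K : ℝ := Real.sqrt lam₀ * ℓ / π with hK
  have hsq : 0 < Real.sqrt lam₀ := Real.sqrt_pos.mpr hlam₀
  have hπ : 0 < π := Real.pi_pos
  have hKpos : 0 < K := by rw [hK]; positivity
  refine ⟨1, one_pos, 2 * c / (2 * K + 1), by positivity, ?_⟩
  intro ε hε hε1 hgap
  set t : ℝ := K / ε with ht
  have htpos : 0 < t := by rw [ht]; positivity
  set n : ℕ := (round t).toNat with hn
  have hround : (0:ℤ) ≤ round t := by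
    rw [round_eq]
    exact Int.floor_nonneg.mpr (by linarith)
  have hnt : (n : ℝ) = ((round t : ℤ) : ℝ) := by
    rw [hn]
    exact_mod_cast Int.toNat_of_nonneg hround
  have hs : |t - (n : ℝ)| ≤ 1 / 2 := by
    rw [hnt]; exact abs_sub_round t
  have hε2 : (0:ℝ) < ε ^ 2 := by positivity
  have hntpos : 0 < (n : ℝ) + t := by
    have : (0:ℝ) ≤ (n : ℝ) := n.cast_nonneg
    linarith
  -- rewrite lam₀ * ℓ^2 / π^2 = ε^2 t^2 (= K^2)
  have hKsq : K ^ 2 = lam₀ * ℓ ^ 2 / π ^ 2 := by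
    rw [hK, div_pow, mul_pow, Real.sq_sqrt hlam₀.le]
  have hεt : ε * t = K := by
    rw [ht]; field_simp
  have hlamstar : lam₀ * ℓ ^ 2 / π ^ 2 = ε ^ 2 * t ^ 2 := by
    rw [← hKsq, ← hεt]; ring
  have hgapn := hgap n
  rw [hlamstar] at hgapn
  have key : ε ^ 2 * (|(n : ℝ) - t| * ((n : ℝ) + t)) ≥ c * ε := by
    have e1 : ε ^ 2 * ((n : ℝ) ^ 2 - t ^ 2) = ε ^ 2 * (n : ℝ) ^ 2 - ε ^ 2 * t ^ 2 := by ring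
    have e2 : |ε ^ 2 * (n : ℝ) ^ 2 - ε ^ 2 * t ^ 2| = ε ^ 2 * |(n : ℝ) ^ 2 - t ^ 2| := by
      rw [← e1, abs_mul, abs_of_pos hε2]
    have e3 : |(n : ℝ) ^ 2 - t ^ 2| = |(n : ℝ) - t| * ((n : ℝ) + t) := by
      have : (n : ℝ) ^ 2 - t ^ 2 = ((n : ℝ) - t) * ((n : ℝ) + t) := by ring
      rw [this, abs_mul, abs_of_pos hntpos]
    rw [← e3, ← e2]
    exact hgapn
  have hnle : (n : ℝ) ≤ t + 1 / 2 := by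
    have := abs_le.mp hs
    linarith [this.1]
  -- lower bound on |n - t|
  have hdist : |(n : ℝ) - t| ≥ c / (2 * K + 1) := by
    have h3 : ε * ((n : ℝ) + t) ≤ 2 * K + 1 := by
      have h4 : (n : ℝ) + t ≤ 2 * t + 1 / 2 := by linarith
      have h5 : ε * ((n : ℝ) + t) ≤ ε * (2 * t + 1 / 2) := by nlinarith
      have h6 : ε * (2 * t + 1 / 2) = 2 * K + ε / 2 := by rw [← hεt]; ring
      linarith
    rw [ge_iff_le, div_le_iff₀ (by linarith)]
    have habs : 0 ≤ |(n : ℝ) - t| := abs_nonneg _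
    have h8 : (|(n:ℝ)-t| * ε) * (ε * ((n:ℝ)+t)) ≤ (|(n:ℝ)-t| * ε) * (2*K+1) :=
      mul_le_mul_of_nonneg_left h3 (mul_nonneg habs hε.le)
    have h10 : c * ε ≤ (|(n:ℝ)-t| * (2*K+1)) * ε := by nlinarith [key]
    exact le_of_mul_le_mul_right (by linarith) hε
  -- |sin(π t)| = |sin(π (t - n))|
  have harg : Real.sqrt lam₀ * ℓ / ε = π * t := by
    rw [ht, hK]; field_simp
  rw [harg]
  have hcosn : |Real.cos ((n : ℝ) * π)| = 1 := by
    have := Real.abs_cos_int_mul_pi (n : ℤ)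
    push_cast at this
    exact this
  have hsin_eq : |Real.sin (π * t)| = |Real.sin (π * (t - (n : ℝ)))| := by
    have e : π * t = π * (t - (n : ℝ)) + (n : ℝ) * π := by ring
    rw [e, Real.sin_add, Real.sin_nat_mul_pi, mul_zero, add_zero, abs_mul, hcosn, mul_one]
  rw [hsin_eq]
  have hsabs : |t - (n : ℝ)| ≤ 1 / 2 := hs
  have hsin_abs : |Real.sin (π * (t - (n : ℝ)))| = Real.sin (π * |t - (n : ℝ)|) := by
    rcases abs_cases (t - (n : ℝ)) with ⟨h1, h2⟩ | ⟨h1, h2⟩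
    · rw [h1]
      have hb : π * (t - (n:ℝ)) ≤ π * (1/2) :=
        mul_le_mul_of_nonneg_left (by linarith [abs_le.mp hsabs]) hπ.le
      exact abs_of_nonneg (Real.sin_nonneg_of_nonneg_of_le_pi
        (mul_nonneg hπ.le h2) (by linarith))
    · rw [h1]
      have hb : π * -(t - (n:ℝ)) ≤ π * (1/2) :=
        mul_le_mul_of_nonneg_left (by linarith [abs_le.mp hsabs]) hπ.le
      have hu : 0 ≤ Real.sin (π * -(t - (n:ℝ))) :=
        Real.sin_nonneg_of_nonneg_of_le_pi (mul_nonneg hπ.le (by linarith)) (by linarith)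
      rw [show π * (t - (n:ℝ)) = -(π * -(t - (n:ℝ))) by ring, Real.sin_neg, abs_neg,
        abs_of_nonneg hu]
  rw [hsin_abs]
  have hd2 : |t - (n : ℝ)| ≥ c / (2 * K + 1) := by
    rwa [abs_sub_comm] at hdist
  have hlow : 2 / π * (π * |t - (n : ℝ)|) ≤ Real.sin (π * |t - (n : ℝ)|) := by
    have hb : π * |t - (n:ℝ)| ≤ π * (1/2) :=
      mul_le_mul_of_nonneg_left hsabs hπ.le
    exact Real.mul_le_sin (mul_nonneg hπ.le (abs_nonneg _)) (by linarith)
  have h2s : 2 / π * (π * |t - (n : ℝ)|) = 2 * |t - (n : ℝ)| := by field_simp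
  have hfin : 2 * |t - (n : ℝ)| ≥ 2 * (c / (2 * K + 1)) := by linarith
  have : 2 * (c / (2 * K + 1)) = 2 * c / (2 * K + 1) := by ring
  linarith [hlow, h2s.symm.le]
end
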